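/- For every positive integer k, the cube of the k-th metallic ratio equals the (k³+3k)-th metallic ratio: (𝔰_k)³ = 𝔰_{k³+3k}. -/
import Mathlib


/-- The `k`-th metallic ratio `(k + √(k² + 4)) / 2`. -/
noncomputable def metallic (k : ℕ) : ℝ := (k + Real.sqrt (k ^ 2 + 4)) / 2

/-- The cube of the `k`-th metallic ratio is the `(k³ + 3k)`-th metallic ratio. -/
theorem metallic_cube (k : ℕ) (hk : 0 < k) :
    metallic k ^ 3 = metallic (k ^ 3 + 3 * k) := by
  unfold metallic
  set s : ℝ := Real.sqrt ((k : ℝ) ^ 2 + 4) with hsdef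
  have hnn : (0:ℝ) ≤ (k : ℝ) ^ 2 + 4 := by positivity
  have hs : s ^ 2 = (k : ℝ) ^ 2 + 4 := Real.sq_sqrt hnn
  have hsnn : 0 ≤ s := Real.sqrt_nonneg _
  have key : Real.sqrt (((k ^ 3 + 3 * k : ℕ) : ℝ) ^ 2 + 4) = ((k : ℝ) ^ 2 + 1) * s := by
    have h1 : (((k ^ 3 + 3 * k : ℕ) : ℝ) ^ 2 + 4) = (((k : ℝ) ^ 2 + 1) * s) ^ 2 := by
      push_cast
      nlinarith [hs]
    rw [h1, Real.sqrt_sq (by positivity)]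
  rw [key]
  push_cast
  linear_combination ((3 * (k : ℝ) + s) / 8) * hs
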